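/- Let [n_1, ..., n_l] and [m_1, ..., m_t] be Hirzebruch–Jung continued fractions (all entries ≥ 2) such that [n_1, ..., n_l, 1, m_1, ..., m_t] = 0. If [m_1, ..., m_t] = q/q_1 with 0 < q_1 < q and gcd(q, q_1) = 1, then [n_l, ..., n_1] = q/(q - q_1). -/

import Mathlib

/-!
Write `g_n y = n - y⁻¹`, so that `[n₁, …, n_l, y] = g_{n₁} (⋯ (g_{n_l} y))`. The key identity is
`g_n y = w⁻¹ ↔ y = (g_n w)⁻¹`; iterating it, `[n₁, …, n_l, y] = w⁻¹` forces
`y = [n_l, …, n₁, w]⁻¹`, with the order of the entries reversed. Lean's convention `0⁻¹ = 0`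
gives `g_n 0 = n`, so `[n₁, …, n_l]` is the value at the tail `0`, and `w = 0` turns
`[n₁, …, n_l, 1, m₁, …, m_t] = 0` into `[n_l, …, n₁]⁻¹ = [1, m₁, …, m_t] = 1 - q₁/q`.
-/

/-- Hirzebruch–Jung continued fraction value: `hj [n₁, …, n_l] = n₁ - 1/(n₂ - 1/(⋯ - 1/n_l))`. -/
def hj : List ℤ → ℚ
  | [] => 0
  | [n] => (n : ℚ)
  | n :: l => (n : ℚ) - 1 / hj l

/-- The continued fraction `[n₁, …, n_l, y]` whose last entry `y` is an arbitrary rational. -/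
def hjWithTail (l : List ℤ) (y : ℚ) : ℚ :=
  l.foldr (fun (n : ℤ) (z : ℚ) => n - z⁻¹) y

@[simp]
lemma hjWithTail_nil (y : ℚ) : hjWithTail [] y = y := rfl

@[simp]
lemma hjWithTail_cons (n : ℤ) (l : List ℤ) (y : ℚ) :
    hjWithTail (n :: l) y = n - (hjWithTail l y)⁻¹ := rfl

lemma hjWithTail_append (l t : List ℤ) (y : ℚ) :
    hjWithTail (l ++ t) y = hjWithTail l (hjWithTail t y) :=
  List.foldr_append

lemma hj_eq_hjWithTail_zero : ∀ l : List ℤ, hj l = hjWithTail l 0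
  | [] => rfl
  | [n] => by simp [hj]
  | n :: m :: l => by
    show (n : ℚ) - 1 / hj (m :: l) = _
    rw [hj_eq_hjWithTail_zero (m :: l), one_div]
    rfl

lemma hj_append (l t : List ℤ) : hj (l ++ t) = hjWithTail l (hj t) := by
  rw [hj_eq_hjWithTail_zero, hjWithTail_append, ← hj_eq_hjWithTail_zero]

lemma eq_inv_hjWithTail_reverse_of_hjWithTail_eq_inv (l : List ℤ) (y w : ℚ)
    (h : hjWithTail l y = w⁻¹) : y = (hjWithTail l.reverse w)⁻¹ := by
  induction l generalizing w with
  | nil => simpa using h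
  | cons n l ih =>
    have htail : hjWithTail l y = (n - w⁻¹)⁻¹ := by
      rw [← h, hjWithTail_cons, sub_sub_cancel, inv_inv]
    rw [ih _ htail, List.reverse_cons, hjWithTail_append]
    rfl

lemma hj_reverse_eq_inv_of_hj_append_eq_zero (l t : List ℤ) (h : hj (l ++ t) = 0) :
    hj l.reverse = (hj t)⁻¹ := by
  rw [hj_append, ← inv_zero] at h
  rw [eq_inv_hjWithTail_reverse_of_hjWithTail_eq_inv l _ 0 h, inv_inv, hj_eq_hjWithTail_zero]

theorem stmt0_general (ns ms : List ℤ)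
    (hzero : hj (ns ++ 1 :: ms) = 0)
    (q q₁ : ℤ) (hq₁ : 0 < q₁) (hlt : q₁ < q)
    (hval : hj ms = (q : ℚ) / q₁) :
    hj ns.reverse = (q : ℚ) / (q - q₁) := by
  have hq : (q : ℚ) ≠ 0 := by exact_mod_cast (hq₁.trans hlt).ne'
  have hone : hj (1 :: ms) = 1 - (q₁ : ℚ) / q := by
    rw [← List.singleton_append, hj_append, hval, hjWithTail_cons, hjWithTail_nil, inv_div,
      Int.cast_one]
  rw [hj_reverse_eq_inv_of_hj_append_eq_zero ns _ hzero, hone]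
  field_simp

theorem stmt0 (ns ms : List ℤ) (hns : ns ≠ []) (hms : ms ≠ [])
    (hn2 : ∀ n ∈ ns, 2 ≤ n) (hm2 : ∀ m ∈ ms, 2 ≤ m)
    (hzero : hj (ns ++ 1 :: ms) = 0)
    (q q₁ : ℤ) (hq₁ : 0 < q₁) (hlt : q₁ < q) (hcop : Int.gcd q q₁ = 1)
    (hval : hj ms = (q : ℚ) / q₁) :
    hj ns.reverse = (q : ℚ) / (q - q₁) :=
  stmt0_general ns ms hzero q q₁ hq₁ hlt hval
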